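/- arXiv:1312.1006 — 2 statements merged into one kernel-verified Lean document; each statement's English description precedes it below -/
import Mathlib

section
/- Let $\{\varphi_t\}$ be the DLGI generated by a monotone, $L^\infty_t$-local family $\{\mu_t\}$, i.e. $\varphi_t(V)=\liminf_{T\to\infty}\frac{1}{T}\mu_t(\ln(V_T/V_t))$. If each $\varphi_t$ is monotone and $L^\infty_t$-local on $\mathbb{V}$ (i.e., $\{\varphi_t\}$ is a dynamic assessment index), then for all $t$ and all $V\in\mathbb{V}$, $\liminf_{T\to\infty}\frac{1}{T}\mu_t(\ln(V_T/V_t)) = \liminf_{T\to\infty}\frac{1}{T}\mu_t(\ln V_T)$. -/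
open MeasureTheory Filter Set

/-- Extended-real logarithm of a (nonnegative) real, with `ln 0 = -∞`. -/
noncomputable def elog (x : ℝ) : EReal := if x ≤ 0 then ⊥ else ((Real.log x : ℝ) : EReal)

/-- Membership in the cone `𝕍` of nonnegative adapted processes absorbed at `0`. -/
def MemV {Ω : Type*} [m : MeasurableSpace Ω] (ℱ : MeasureTheory.Filtration ℕ m)
    (V : ℕ → Ω → ℝ) : Prop :=
  (∀ t, Measurable[ℱ t] (V t)) ∧ (∀ t ω, 0 ≤ V t ω) ∧
    (∀ s t : ℕ, s ≤ t → ∀ ω, V s ω = 0 → V t ω = 0)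

/-- The DLGI generated by `μ`: `φₜ(V) = liminf_{T→∞} (1/T) μₜ(ln(V_T/V_t))`. -/
noncomputable def DLGI {Ω : Type*} (μ : ℕ → (Ω → EReal) → Ω → EReal)
    (t : ℕ) (V : ℕ → Ω → ℝ) : Ω → EReal :=
  fun ω => Filter.liminf
    (fun T : ℕ => (((T : ℝ)⁻¹ : ℝ) : EReal) * μ t (fun ω' => elog (V T ω' / V t ω')) ω)
    Filter.atTop

/-- The product `m ·ₜ V`, multiplying only the entries with index `≥ t`; here the
multiplier is the indicator of a set `A ∈ ℱₜ`. -/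
noncomputable def indMulV {Ω : Type*} (t : ℕ) (A : Set Ω) (V : ℕ → Ω → ℝ) : ℕ → Ω → ℝ :=
  fun T ω => if t ≤ T then A.indicator (V T) ω else V T ω

/-!
Split `Ω` along the `ℱₜ`-set `A = {V_t ≥ 1}`, on which `μₜ` acts locally. On `A`, dividing by
`V_t` can only lower `ln V_T`; conversely, replacing `V_t` by `min(V_t, 1)` gives a smaller
process in `𝕍` whose ratios `V_T / V_t` (`T > t`) are exactly `V_T` on `A`, so monotonicity of
`φₜ` bounds `liminf (1/T) μₜ(ln V_T)` by `φₜ(V)` there. On `Aᶜ` all inequalities reverse and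
`V_t` is raised to `1` instead.
-/

lemma elog_mono : Monotone elog := by
  intro x y h
  unfold elog
  by_cases hx : x ≤ 0
  · simp [hx]
  · rw [if_neg hx, if_neg fun hy => hx (h.trans hy)]
    exact EReal.coe_le_coe_iff.mpr (Real.log_le_log (lt_of_not_ge hx) h)

/-- By definition `DLGI μ t V = growthRate (μ t) (fun T ω => elog (V T ω / V t ω))`, and the
right-hand side of the theorem is `growthRate (μ t) (fun T ω => elog (V T ω))`. -/
noncomputable def growthRate {Ω : Type*} (μ₀ : (Ω → EReal) → Ω → EReal) (X : ℕ → Ω → EReal)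
    (ω : Ω) : EReal :=
  liminf (fun T : ℕ => (((T : ℝ)⁻¹ : ℝ) : EReal) * μ₀ (X T) ω) atTop

section Locality

variable {Ω : Type*} [MeasurableSpace Ω] {P : Measure Ω} {μ₀ : (Ω → EReal) → Ω → EReal}
  {S : Set Ω}

lemma ae_apply_le_apply_on
    (hmono : ∀ X Y : Ω → EReal, (∀ᵐ ω ∂P, X ω ≤ Y ω) → ∀ᵐ ω ∂P, μ₀ X ω ≤ μ₀ Y ω)
    (hlocal : ∀ X : Ω → EReal, ∀ᵐ ω ∂P, S.indicator (μ₀ X) ω = S.indicator (μ₀ (S.indicator X)) ω)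
    {X Y : Ω → EReal} (h : ∀ ω ∈ S, X ω ≤ Y ω) :
    ∀ᵐ ω ∂P, ω ∈ S → μ₀ X ω ≤ μ₀ Y ω := by
  have hXY : ∀ ω, S.indicator X ω ≤ S.indicator Y ω := by
    intro ω
    by_cases hω : ω ∈ S
    · simpa [hω] using h ω hω
    · simp [hω]
  filter_upwards [hlocal X, hlocal Y, hmono _ _ (ae_of_all _ hXY)] with ω hX hY hle hω
  rw [indicator_of_mem hω, indicator_of_mem hω] at hX hY
  rwa [hX, hY]

lemma ae_growthRate_le_on
    (hmono : ∀ X Y : Ω → EReal, (∀ᵐ ω ∂P, X ω ≤ Y ω) → ∀ᵐ ω ∂P, μ₀ X ω ≤ μ₀ Y ω)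
    (hlocal : ∀ X : Ω → EReal, ∀ᵐ ω ∂P, S.indicator (μ₀ X) ω = S.indicator (μ₀ (S.indicator X)) ω)
    {X Y : ℕ → Ω → EReal} (h : ∀ᶠ T in atTop, ∀ ω ∈ S, X T ω ≤ Y T ω) :
    ∀ᵐ ω ∂P, ω ∈ S → growthRate μ₀ X ω ≤ growthRate μ₀ Y ω := by
  obtain ⟨N, hN⟩ := eventually_atTop.mp h
  have hT : ∀ T, ∀ᵐ ω ∂P, N ≤ T → ω ∈ S → μ₀ (X T) ω ≤ μ₀ (Y T) ω := fun T => by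
    by_cases hNT : N ≤ T
    · filter_upwards [ae_apply_le_apply_on hmono hlocal (hN T hNT)] with ω hω _ using hω
    · exact ae_of_all _ fun ω h => absurd h hNT
  filter_upwards [ae_all_iff.mpr hT] with ω hω hωS
  refine liminf_le_liminf ?_
  filter_upwards [eventually_ge_atTop N] with T hNT
  exact mul_le_mul_of_nonneg_left (hω T hNT hωS) (EReal.coe_nonneg.mpr (by positivity))

end Locality

section Modification

variable {Ω : Type*} {V : ℕ → Ω → ℝ} {t T : ℕ} {ω : Ω}

noncomputable def capAt (t : ℕ) (V : ℕ → Ω → ℝ) : ℕ → Ω → ℝ :=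
  Function.update V t fun ω => min (V t ω) 1

/-- On `{V_t = 0}` the value must stay `0` for the process to remain absorbed at `0`. -/
noncomputable def liftAt (t : ℕ) (V : ℕ → Ω → ℝ) : ℕ → Ω → ℝ :=
  Function.update V t fun ω => if V t ω = 0 then 0 else max (V t ω) 1

lemma capAt_le : capAt t V T ω ≤ V T ω := by
  rcases eq_or_ne T t with rfl | hT
  · simp [capAt]
  · simp [capAt, hT]

lemma le_liftAt : V T ω ≤ liftAt t V T ω := by
  rcases eq_or_ne T t with rfl | hT
  · by_cases h : V T ω = 0 <;> simp [liftAt, h]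
  · simp [liftAt, hT]

lemma capAt_div_capAt (htT : t < T) (hω : 1 ≤ V t ω) :
    capAt t V T ω / capAt t V t ω = V T ω := by
  simp [capAt, htT.ne', min_eq_right hω]

end Modification

namespace MemV

variable {Ω : Type*} [m : MeasurableSpace Ω] {ℱ : Filtration ℕ m} {V : ℕ → Ω → ℝ}
  {t T : ℕ} {ω : Ω}

lemma measurable (hV : MemV ℱ V) (t : ℕ) : Measurable[ℱ t] (V t) := hV.1 t

lemma nonneg (hV : MemV ℱ V) (t : ℕ) (ω : Ω) : 0 ≤ V t ω := hV.2.1 t ω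

lemma eq_zero_of_le (hV : MemV ℱ V) {s : ℕ} (hst : s ≤ t) (h : V s ω = 0) : V t ω = 0 :=
  hV.2.2 s t hst ω h

lemma update (hV : MemV ℱ V) {f : Ω → ℝ} (hf : Measurable[ℱ t] f) (hf₀ : ∀ ω, 0 ≤ f ω)
    (hfz : ∀ ω, f ω = 0 ↔ V t ω = 0) : MemV ℱ (Function.update V t f) := by
  have hz : ∀ s ω, Function.update V t f s ω = 0 ↔ V s ω = 0 := by
    intro s ω
    rcases eq_or_ne s t with rfl | hs
    · simpa using hfz ω
    · simp [hs]
  refine ⟨fun s => ?_, fun s ω => ?_, fun s u hsu ω h => (hz u ω).mpr ?_⟩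
  · rcases eq_or_ne s t with rfl | hs
    · simpa using hf
    · simpa [hs] using hV.measurable s
  · rcases eq_or_ne s t with rfl | hs
    · simpa using hf₀ ω
    · simpa [hs] using hV.nonneg s ω
  · exact hV.eq_zero_of_le hsu ((hz s ω).mp h)

lemma capAt_mem (hV : MemV ℱ V) (t : ℕ) : MemV ℱ (capAt t V) := by
  refine hV.update ((hV.measurable t).min measurable_const)
    (fun ω => le_min (hV.nonneg t ω) zero_le_one) fun ω => ?_
  rcases le_total (V t ω) 1 with h | h
  · rw [min_eq_left h]
  · rw [min_eq_right h]
    constructor <;> intro h' <;> linarith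

lemma liftAt_mem (hV : MemV ℱ V) (t : ℕ) : MemV ℱ (liftAt t V) := by
  refine hV.update (Measurable.ite (hV.measurable t (measurableSet_singleton 0))
    measurable_const ((hV.measurable t).max measurable_const)) (fun ω => ?_) fun ω => ?_
  · split_ifs
    exacts [le_rfl, zero_le_one.trans (le_max_right _ _)]
  · split_ifs with h
    · simp [h]
    · simp only [h, iff_false]
      exact (zero_lt_one.trans_le (le_max_right _ _)).ne'

lemma liftAt_div_liftAt (hV : MemV ℱ V) (htT : t < T) (hω : V t ω ≤ 1) :
    liftAt t V T ω / liftAt t V t ω = V T ω := by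
  by_cases h₀ : V t ω = 0
  · simp [_root_.liftAt, htT.ne', h₀, hV.eq_zero_of_le htT.le h₀]
  · simp [_root_.liftAt, htT.ne', h₀, max_eq_right hω]

lemma elog_le_elog_div (hV : MemV ℱ V) (htT : t ≤ T) (hω : V t ω ≤ 1) :
    elog (V T ω) ≤ elog (V T ω / V t ω) := by
  rcases (hV.nonneg t ω).eq_or_lt with h₀ | hpos
  · simp [hV.eq_zero_of_le htT h₀.symm]
  · exact elog_mono (le_div_self (hV.nonneg T ω) hpos hω)

end MemV

theorem dai_implies_enough_general {Ω : Type*} [m : MeasurableSpace Ω] (P : Measure Ω)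
    (ℱ : MeasureTheory.Filtration ℕ m)
    (μ : ℕ → (Ω → EReal) → Ω → EReal)
    (hmono : ∀ t, ∀ X Y : Ω → EReal, (∀ᵐ ω ∂P, X ω ≤ Y ω) → ∀ᵐ ω ∂P, μ t X ω ≤ μ t Y ω)
    (hlocal : ∀ t, ∀ A : Set Ω, MeasurableSet[ℱ t] A → ∀ X : Ω → EReal,
      ∀ᵐ ω ∂P, A.indicator (μ t X) ω = A.indicator (μ t (A.indicator X)) ω)
    (hphimono : ∀ t, ∀ V V' : ℕ → Ω → ℝ, MemV ℱ V → MemV ℱ V' →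
      (∀ T : ℕ, ∀ᵐ ω ∂P, V' T ω ≤ V T ω) → ∀ᵐ ω ∂P, DLGI μ t V' ω ≤ DLGI μ t V ω)
    (t : ℕ) (V : ℕ → Ω → ℝ) (hV : MemV ℱ V) :
    ∀ᵐ ω ∂P, DLGI μ t V ω =
      Filter.liminf
        (fun T : ℕ => (((T : ℝ)⁻¹ : ℝ) : EReal) * μ t (fun ω' => elog (V T ω')) ω)
        Filter.atTop := by
  have hA : MeasurableSet[ℱ t] {ω | 1 ≤ V t ω} :=
    measurableSet_le measurable_const (hV.measurable t)
  have on_A := fun {X Y} => ae_growthRate_le_on (X := X) (Y := Y) (hmono t) (hlocal t _ hA)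
  have on_Ac := fun {X Y} => ae_growthRate_le_on (X := X) (Y := Y) (hmono t) (hlocal t _ hA.compl)
  filter_upwards [
    on_A (.of_forall fun T ω hω => elog_mono (div_le_self (hV.nonneg T ω) hω)),
    on_Ac (eventually_ge_atTop t |>.mono fun T htT ω (hω : ¬1 ≤ V t ω) =>
      hV.elog_le_elog_div htT (not_le.mp hω).le),
    hphimono t V (capAt t V) hV (hV.capAt_mem t) fun T => ae_of_all _ fun ω => capAt_le,
    on_A (eventually_gt_atTop t |>.mono fun T htT ω hω =>
      (congrArg elog (capAt_div_capAt htT hω)).ge),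
    hphimono t (liftAt t V) V (hV.liftAt_mem t) hV fun T => ae_of_all _ fun ω => le_liftAt,
    on_Ac (eventually_gt_atTop t |>.mono fun T htT ω (hω : ¬1 ≤ V t ω) =>
      (congrArg elog (hV.liftAt_div_liftAt htT (not_le.mp hω).le)).le)]
    with ω h_div_le h_le_div h_cap h_le_cap h_lift h_lift_le
  by_cases hω : 1 ≤ V t ω
  · exact le_antisymm (h_div_le hω) ((h_le_cap hω).trans h_cap)
  · exact le_antisymm (h_lift.trans (h_lift_le hω)) (h_le_div hω)

/-- if the DLGI `{φₜ}` generated by a monotone local family `{μₜ}` is itself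
monotone and `L^∞ₜ`-local on `𝕍` (i.e. is a dynamic assessment index), then
`liminf (1/T) μₜ(ln(V_T/V_t)) = liminf (1/T) μₜ(ln V_T)` a.s. for all `t` and `V ∈ 𝕍`. -/
theorem dai_implies_enough {Ω : Type*} [m : MeasurableSpace Ω] (P : Measure Ω)
    [IsProbabilityMeasure P] (ℱ : MeasureTheory.Filtration ℕ m)
    (μ : ℕ → (Ω → EReal) → Ω → EReal)
    (hmeas : ∀ t X, Measurable[ℱ t] (μ t X))
    (hmono : ∀ t, ∀ X Y : Ω → EReal, (∀ᵐ ω ∂P, X ω ≤ Y ω) → ∀ᵐ ω ∂P, μ t X ω ≤ μ t Y ω)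
    (hlocal : ∀ t, ∀ A : Set Ω, MeasurableSet[ℱ t] A → ∀ X : Ω → EReal,
      ∀ᵐ ω ∂P, A.indicator (μ t X) ω = A.indicator (μ t (A.indicator X)) ω)
    (hphimono : ∀ t, ∀ V V' : ℕ → Ω → ℝ, MemV ℱ V → MemV ℱ V' →
      (∀ T : ℕ, ∀ᵐ ω ∂P, V' T ω ≤ V T ω) → ∀ᵐ ω ∂P, DLGI μ t V' ω ≤ DLGI μ t V ω)
    (hphilocal : ∀ t, ∀ A : Set Ω, MeasurableSet[ℱ t] A → ∀ V : ℕ → Ω → ℝ, MemV ℱ V →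
      ∀ᵐ ω ∂P, A.indicator (DLGI μ t V) ω = A.indicator (DLGI μ t (indMulV t A V)) ω)
    (t : ℕ) (V : ℕ → Ω → ℝ) (hV : MemV ℱ V) :
    ∀ᵐ ω ∂P, DLGI μ t V ω =
      Filter.liminf
        (fun T : ℕ => (((T : ℝ)⁻¹ : ℝ) : EReal) * μ t (fun ω' => elog (V T ω')) ω)
        Filter.atTop :=
  dai_implies_enough_general (m := m) P ℱ μ hmono hlocal hphimono t V hV
end

section
/- Let $\gamma>0$ and $V\in\mathbb{V}$ with $P[V_t>0]=1$. Then $[\varphi^\gamma_t(V)]^+ = \liminf_{T\to\infty}\frac{1}{T}\mu^\gamma_t([\ln(V_T/V_t)]^+)$ a.s., where $\varphi^\gamma_t(V)=\liminf_{T\to\infty}\frac{1}{\gamma T}\ln E[V_T^\gamma\mid\mathcal{F}_t]$ and $\mu^\gamma_t(X)=\frac{1}{\gamma}\ln E[e^{\gamma X}\mid\mathcal{F}_t]$, and $x^+=\max(x,0)$. -/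
/-!
Conditionally on `ℱ t`, the kernel `condExpKernel P (ℱ t) ω` is concentrated where `V t = c := V t ω`,
so under it `e^{γ [ln(V_T/V_t)]⁺} = max((V_T/c)^γ, 1)`. With `a_T = E[(V_T/c)^γ | ℱ t]` we have
`max(a_T, 1) ≤ E[max((V_T/c)^γ, 1) | ℱ t] ≤ a_T + 1 ≤ 2 max(a_T, 1)`, so the logarithm of the middle
term is `max(ln a_T, 0)` up to `ln 2`, while `ln E[V_T^γ | ℱ t] = ln a_T + γ ln c`. Bounded errors
vanish after division by `γT`, and `x ↦ max(x, 0)` commutes with `liminf`.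
-/

open MeasureTheory ProbabilityTheory Filter Set
open scoped ENNReal

/-- The positive part of an extended real, as an extended nonnegative real. -/
noncomputable def epos (x : EReal) : ℝ≥0∞ := if x = ⊤ then ⊤ else ENNReal.ofReal x.toReal

/-- Conditional expectation of an extended-real-valued random variable,
`E[X|ℱₜ] = E[X⁺|ℱₜ] - E[X⁻|ℱₜ]` with the convention `∞ - ∞ = -∞`. -/
noncomputable def erealCondExp {Ω : Type*} [mΩ : MeasurableSpace Ω] [StandardBorelSpace Ω]
    (P : Measure Ω) [IsFiniteMeasure P] (mt : MeasurableSpace Ω) (W : Ω → EReal) : Ω → EReal :=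
  fun ω => ((∫⁻ x, epos (W x) ∂(@condExpKernel Ω mΩ _ P _ mt ω) : ℝ≥0∞) : EReal)
    - ((∫⁻ x, epos (-(W x)) ∂(@condExpKernel Ω mΩ _ P _ mt ω) : ℝ≥0∞) : EReal)

/-- The dynamic monetary entropic utility on `[-∞,∞)`-valued random variables:
`μ^γ_t(W) = (1/γ) ln E[e^{γW}|ℱₜ]` for `γ ≠ 0`, and `μ^0_t(W) = E[W|ℱₜ]`. -/
noncomputable def entropicE {Ω : Type*} [mΩ : MeasurableSpace Ω] [StandardBorelSpace Ω]
    (P : Measure Ω) [IsFiniteMeasure P] (mt : MeasurableSpace Ω) (γ : ℝ) (W : Ω → EReal) :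
    Ω → EReal :=
  if γ = 0 then @erealCondExp Ω mΩ _ P _ mt W
  else fun ω => ((γ⁻¹ : ℝ) : EReal) *
    ENNReal.log (∫⁻ x, EReal.exp ((γ : EReal) * W x) ∂(@condExpKernel Ω mΩ _ P _ mt ω))

/-- The dynamic risk sensitive criterion
`φ^γ_t(V) = liminf_T (1/(γT)) ln E[V_T^γ | ℱₜ]` for `γ ≠ 0` and
`φ^0_t(V) = liminf_T (1/T) E[ln V_T | ℱₜ]` (with `0^γ = ∞` for `γ < 0` and `ln 0 = -∞`). -/
noncomputable def drsc {Ω : Type*} [mΩ : MeasurableSpace Ω] [StandardBorelSpace Ω]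
    (P : Measure Ω) [IsFiniteMeasure P] (ℱ : MeasureTheory.Filtration ℕ mΩ) (γ : ℝ)
    (t : ℕ) (V : ℕ → Ω → ℝ) : Ω → EReal :=
  if γ = 0 then fun ω =>
    Filter.liminf (fun T : ℕ =>
      (((T : ℝ)⁻¹ : ℝ) : EReal) * erealCondExp P (ℱ t) (fun x => elog (V T x)) ω) Filter.atTop
  else fun ω =>
    Filter.liminf (fun T : ℕ =>
      ((((γ * T)⁻¹ : ℝ)) : EReal) *
        ENNReal.log (∫⁻ x, (ENNReal.ofReal (V T x)) ^ γ ∂(@condExpKernel Ω mΩ _ P _ (ℱ t) ω)))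
      Filter.atTop

open Topology

lemma ae_ae_condExpKernel_eq_self {Ω β : Type*} {m : MeasurableSpace Ω} [mΩ : MeasurableSpace Ω]
    [StandardBorelSpace Ω] {μ : Measure Ω} [IsFiniteMeasure μ] [MeasurableSpace β]
    [MeasurableEq β] (hm : m ≤ mΩ) {g : Ω → β} (hg : Measurable[m] g) :
    ∀ᵐ ω ∂μ, ∀ᵐ x ∂(condExpKernel μ m ω), g x = g ω := by
  have hdiag : ∀ᵐ p ∂((μ.trim hm) ⊗ₘ condExpKernel μ m), g p.2 = g p.1 := by
    rw [compProd_trim_condExpKernel, ae_map_iff]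
    · exact ae_of_all _ fun _ => rfl
    · exact ⟨_, @Measurable.prodMk Ω mΩ Ω Ω m mΩ id id (measurable_id'' hm) measurable_id,
        ae_eq_refl _⟩
    · exact measurableSet_eq_fun (m := m.prod mΩ)
        ((hg.mono hm le_rfl).comp (@measurable_snd _ _ m mΩ)) (hg.comp (@measurable_fst _ _ m mΩ))
  exact ae_of_ae_trim hm (Measure.ae_ae_of_ae_compProd hdiag)

namespace EReal

variable {ι : Type*} {f : Filter ι}

lemma le_of_forall_pos_le_add {x y : EReal} (h : ∀ ε : ℝ, 0 < ε → x ≤ y + ε) : x ≤ y := by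
  induction y with
  | bot => simpa using h 1 one_pos
  | coe y =>
    induction x with
    | bot => exact bot_le
    | coe x => exact_mod_cast _root_.le_of_forall_pos_le_add fun ε hε => by exact_mod_cast h ε hε
    | top => exact absurd (top_le_iff.1 (h 1 one_pos)) (by rw [← coe_add]; exact coe_ne_top _)
  | top => exact le_top

lemma liminf_add_coe (u : ι → EReal) (c : ℝ) :
    liminf (fun i => u i + c) f = liminf u f + c :=
  let e : EReal ≃o EReal :=
    { toFun := (· + c)
      invFun := (· - c)
      left_inv := fun _ => add_sub_cancel_right
      right_inv := fun _ => sub_add_cancel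
      map_rel_iff' := (addLECancellable_coe c).add_le_add_iff_right }
  e.liminf_apply.symm

lemma liminf_le_of_forall_pos_eventually_le_add {u v : ι → EReal}
    (h : ∀ ε : ℝ, 0 < ε → ∀ᶠ i in f, u i ≤ v i + ε) : liminf u f ≤ liminf v f :=
  le_of_forall_pos_le_add fun ε hε =>
    (liminf_le_liminf (h ε hε)).trans_eq (liminf_add_coe v ε)

lemma eventually_coe_mul_le_coe_mul_add {δ : ι → ℝ} (hδ0 : ∀ i, 0 ≤ δ i)
    (hδ : Tendsto δ f (𝓝 0)) {x y : ι → EReal} {c : ℝ} (hxy : ∀ i, x i ≤ y i + c)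
    {ε : ℝ} (hε : 0 < ε) : ∀ᶠ i in f, (δ i : EReal) * x i ≤ δ i * y i + ε := by
  have hδc : ∀ᶠ i in f, δ i * c < ε := by
    simpa using (hδ.mul_const c).eventually_lt_const (by simpa using hε)
  filter_upwards [hδc] with i hi
  calc (δ i : EReal) * x i ≤ δ i * (y i + c) :=
        mul_le_mul_of_nonneg_left (hxy i) (EReal.coe_nonneg.2 (hδ0 i))
    _ = δ i * y i + (δ i * c : ℝ) := by
        rw [left_distrib_of_nonneg_of_ne_top (EReal.coe_nonneg.2 (hδ0 i)) (coe_ne_top _), coe_mul]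
    _ ≤ δ i * y i + ε := by gcongr

lemma liminf_coe_mul_eq_of_le_add {δ : ι → ℝ} (hδ0 : ∀ i, 0 ≤ δ i) (hδ : Tendsto δ f (𝓝 0))
    {x y : ι → EReal} {c : ℝ} (hxy : ∀ i, x i ≤ y i + c) (hyx : ∀ i, y i ≤ x i + c) :
    liminf (fun i => (δ i : EReal) * x i) f = liminf (fun i => (δ i : EReal) * y i) f :=
  le_antisymm
    (liminf_le_of_forall_pos_eventually_le_add fun _ hε =>
      eventually_coe_mul_le_coe_mul_add hδ0 hδ hxy hε)
    (liminf_le_of_forall_pos_eventually_le_add fun _ hε =>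
      eventually_coe_mul_le_coe_mul_add hδ0 hδ hyx hε)

lemma liminf_coe_mul_add_coe {δ : ι → ℝ} (hδ0 : ∀ i, 0 ≤ δ i) (hδ : Tendsto δ f (𝓝 0))
    (x : ι → EReal) (k : ℝ) :
    liminf (fun i => (δ i : EReal) * (x i + k)) f = liminf (fun i => (δ i : EReal) * x i) f := by
  refine liminf_coe_mul_eq_of_le_add hδ0 hδ (c := |k|) (fun i => ?_) (fun i => ?_)
  · gcongr
    exact_mod_cast le_abs_self k
  · rw [add_assoc, ← coe_add]
    exact le_add_of_nonneg_right (EReal.coe_nonneg.2 (by linarith [neg_abs_le k]))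

lemma max_liminf_coe_mul_zero [f.NeBot] {δ : ι → ℝ} (hδ0 : ∀ i, 0 ≤ δ i) (x : ι → EReal) :
    max (liminf (fun i => (δ i : EReal) * x i) f) 0
      = liminf (fun i => (δ i : EReal) * max (x i) 0) f := by
  refine ((monotone_id.max monotone_const).map_liminf_of_continuousAt (f := fun y => max y 0) _
    (continuous_id.max continuous_const).continuousAt).trans
    (congrArg (liminf · f) (funext fun i => ?_))
  rw [Function.comp_apply, (monotone_mul_left_of_nonneg (EReal.coe_nonneg.2 (hδ0 i))).map_max,
    mul_zero]

end EReal

lemma exp_elog (r : ℝ) : EReal.exp (elog r) = ENNReal.ofReal r := by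
  unfold elog
  split_ifs with h
  · simp [ENNReal.ofReal_eq_zero.2 h]
  · rw [EReal.exp_coe, Real.exp_log (not_le.1 h)]

lemma exp_mul_max_elog_zero {γ : ℝ} (hγ : 0 ≤ γ) (r : ℝ) :
    EReal.exp (γ * max (elog r) 0) = max (ENNReal.ofReal r ^ γ) 1 := by
  rw [EReal.mul_comm, EReal.exp_mul, EReal.exp_monotone.map_max, exp_elog, EReal.exp_zero,
    (ENNReal.monotone_rpow_of_nonneg hγ).map_max, ENNReal.one_rpow]

lemma log_lintegral_ofReal_rpow_eq_log_lintegral_div_add {Ω : Type*} [MeasurableSpace Ω]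
    (μ : Measure Ω) (v : Ω → ℝ) {c γ : ℝ} (hc : 0 < c) (hγ : 0 ≤ γ) :
    ENNReal.log (∫⁻ x, ENNReal.ofReal (v x) ^ γ ∂μ)
      = ENNReal.log (∫⁻ x, ENNReal.ofReal (v x / c) ^ γ ∂μ) + (γ * Real.log c : ℝ) := by
  have hK : ENNReal.ofReal c ^ γ ≠ ⊤ := ENNReal.rpow_ne_top_of_nonneg hγ ENNReal.ofReal_ne_top
  calc ENNReal.log (∫⁻ x, ENNReal.ofReal (v x) ^ γ ∂μ)
      = ENNReal.log (∫⁻ x, ENNReal.ofReal c ^ γ * ENNReal.ofReal (v x / c) ^ γ ∂μ) := by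
        simp_rw [← ENNReal.mul_rpow_of_nonneg _ _ hγ, ← ENNReal.ofReal_mul hc.le,
          mul_div_cancel₀ _ hc.ne']
    _ = _ := by
        rw [lintegral_const_mul' _ _ hK, ENNReal.log_mul_add, ENNReal.log_rpow,
          ENNReal.log_ofReal_of_pos hc, add_comm, EReal.coe_mul]

section LIntegralMaxOne

variable {Ω : Type*} [MeasurableSpace Ω] {μ : Measure Ω} [IsProbabilityMeasure μ] (g : Ω → ℝ≥0∞)

lemma max_lintegral_one_le_lintegral_max_one : max (∫⁻ x, g x ∂μ) 1 ≤ ∫⁻ x, max (g x) 1 ∂μ :=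
  max_le (lintegral_mono fun _ => le_max_left _ _)
    (by simpa using lintegral_mono (μ := μ) fun x => le_max_right (g x) 1)

lemma lintegral_max_one_le_two_mul : ∫⁻ x, max (g x) 1 ∂μ ≤ 2 * max (∫⁻ x, g x ∂μ) 1 :=
  calc ∫⁻ x, max (g x) 1 ∂μ ≤ ∫⁻ x, (g x + 1) ∂μ :=
        lintegral_mono fun _ => max_le_add_of_nonneg zero_le zero_le_one
    _ = ∫⁻ x, g x ∂μ + 1 := by simp [lintegral_add_right _ measurable_const]
    _ ≤ 2 * max (∫⁻ x, g x ∂μ) 1 := by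
        rw [two_mul]
        exact add_le_add (le_max_left _ _) (le_max_right _ _)

lemma max_log_lintegral_zero_le_log_lintegral_max_one : max (ENNReal.log (∫⁻ x, g x ∂μ)) 0
    ≤ ENNReal.log (∫⁻ x, max (g x) 1 ∂μ) := by
  rw [← ENNReal.log_one, ← ENNReal.log_monotone.map_max]
  exact ENNReal.log_monotone (max_lintegral_one_le_lintegral_max_one g)

lemma log_lintegral_max_one_le : ENNReal.log (∫⁻ x, max (g x) 1 ∂μ)
    ≤ max (ENNReal.log (∫⁻ x, g x ∂μ)) 0 + (Real.log 2 : ℝ) := by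
  calc ENNReal.log (∫⁻ x, max (g x) 1 ∂μ) ≤ ENNReal.log (2 * max (∫⁻ x, g x ∂μ) 1) :=
        ENNReal.log_monotone (lintegral_max_one_le_two_mul g)
    _ = _ := by
        rw [ENNReal.log_mul_add, ENNReal.log_monotone.map_max, ENNReal.log_one, add_comm,
          show (2 : ℝ≥0∞) = ENNReal.ofReal 2 by norm_num, ENNReal.log_ofReal_of_pos two_pos]

end LIntegralMaxOne

/-- for `γ > 0` and `V ∈ 𝕍` with `P[V_t > 0] = 1`,
`[φ^γ_t(V)]⁺ = liminf_T (1/T) μ^γ_t([ln(V_T/V_t)]⁺)` a.s., where `x⁺ = max(x,0)`. -/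
theorem drsc_pos_part {Ω : Type*} [m : MeasurableSpace Ω] [StandardBorelSpace Ω]
    (P : Measure Ω) [IsProbabilityMeasure P] (ℱ : MeasureTheory.Filtration ℕ m)
    (γ : ℝ) (hγ : 0 < γ) (t : ℕ) (V : ℕ → Ω → ℝ) (hV : MemV ℱ V)
    (hVt : ∀ᵐ ω ∂P, 0 < V t ω) :
    ∀ᵐ ω ∂P, max (drsc P ℱ γ t V ω) 0 =
      Filter.liminf (fun T : ℕ =>
        (((T : ℝ)⁻¹ : ℝ) : EReal) *
          entropicE P (ℱ t) γ (fun x => max (elog (V T x / V t x)) 0) ω) Filter.atTop := by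
  filter_upwards [hVt, ae_ae_condExpKernel_eq_self (μ := P) (ℱ.le t) (hV.1 t)] with ω hc hκ
  simp only [drsc, entropicE, if_neg hγ.ne']
  set κ := condExpKernel P (ℱ t) ω
  have hδ0 : ∀ T : ℕ, 0 ≤ (γ * T)⁻¹ := fun T => by positivity
  have hδ : Tendsto (fun T : ℕ => (γ * T)⁻¹) atTop (𝓝 0) :=
    (tendsto_natCast_atTop_atTop.const_mul_atTop hγ).inv_tendsto_atTop
  have hentropic : ∀ T : ℕ, ((T : ℝ)⁻¹ : ℝ) * (((γ⁻¹ : ℝ) : EReal) *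
        ENNReal.log (∫⁻ x, EReal.exp (γ * max (elog (V T x / V t x)) 0) ∂κ))
      = ((γ * T)⁻¹ : ℝ) * ENNReal.log (∫⁻ x, max (ENNReal.ofReal (V T x / V t ω) ^ γ) 1 ∂κ) := by
    intro T
    rw [← mul_assoc, ← EReal.coe_mul, ← mul_inv_rev]
    congr 2
    refine lintegral_congr_ae (hκ.mono fun x hx => ?_)
    simp only [hx, exp_mul_max_elog_zero hγ.le]
  simp only [hentropic, log_lintegral_ofReal_rpow_eq_log_lintegral_div_add κ (V _) hc hγ.le]
  rw [EReal.liminf_coe_mul_add_coe hδ0 hδ, EReal.max_liminf_coe_mul_zero hδ0]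
  exact EReal.liminf_coe_mul_eq_of_le_add hδ0 hδ (c := Real.log 2)
    (fun T => le_add_of_le_of_nonneg (max_log_lintegral_zero_le_log_lintegral_max_one _)
      (by positivity))
    (fun T => log_lintegral_max_one_le _)
end
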